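/- Let c ∈ [0,1), f : ℝ → ℝ continuous with t·f(t) ≥ 0 for all t and |f(t)| ≤ a|t| for all |t| ≥ t₀ with some a ≤ 1. Suppose liminf_{t→0⁻} f(t)/t ≥ α₁ and liminf_{t→0⁺} f(t)/t ≥ α₂ with (1−√(1−c))² < αᵢ < (1+√(1−c))² for i = 1,2. Then every solution of x_{n+1} = c·x_n + f(x_n − x_{n−1}) oscillates (is neither eventually positive nor eventually negative). -/

import Mathlib

/-!
Along a positive solution, either the differences `x (n + 1) - x n` eventually stay negative, or
`x` increases. In the first case `x` converges, so the differences tend to `0` from below, and the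
liminf hypothesis turns the equation into `x (n + 2) ≤ (c + β) x (n + 1) - β x n` for some `β`
strictly between `(1 - √(1 - c))²` and `α`; the characteristic polynomial of this comparison
recurrence has no real root, which no positive sequence can tolerate. In the second case a bounded
`x` would converge to a fixed point `L = c L`, i.e. to `0`, while an unbounded `x` forces the
differences beyond `t₀`, where `f` is below the identity, giving the comparison recurrence with
`β = 1`. Eventually negative solutions are handled through the symmetry `x ↦ -x`,
`f ↦ -f (-·)`.
-/

open Filter Topology Set

lemma exists_nonpos_of_le_sub {u : ℕ → ℝ} {δ : ℝ} (hδ : 0 < δ) (hu : ∀ n, u (n + 1) ≤ u n - δ) :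
    ∃ n, u n ≤ 0 := by
  have hbound : ∀ n : ℕ, u n ≤ u 0 - n * δ := by
    intro n
    induction n with
    | zero => simp
    | succ n ih => push_cast; linarith [hu n]
  obtain ⟨n, hn⟩ := exists_nat_gt (u 0 / δ)
  exact ⟨n, by linarith [hbound n, (div_lt_iff₀ hδ).mp hn]⟩

/-- The ratios `y (n + 1) / y n` would have to decrease by at least `(q - p ^ 2 / 4) / p` at every
step. -/
theorem not_forall_pos_of_le_linear_recurrence {p q : ℝ} (hpq : p ^ 2 < 4 * q) {y : ℕ → ℝ}
    (hy : ∀ n, y (n + 2) ≤ p * y (n + 1) - q * y n) : ¬ ∀ n, 0 < y n := by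
  intro hpos
  set r : ℕ → ℝ := fun n => y (n + 1) / y n
  have hr_pos : ∀ n, 0 < r n := fun n => div_pos (hpos _) (hpos _)
  have hr_step : ∀ n, r (n + 1) * r n ≤ p * r n - q := by
    intro n
    have h₀ := hpos n
    have h₁ := hpos (n + 1)
    have h₂ := hy n
    have hrhs : p * (y (n + 1) / y n) - q = (p * y (n + 1) - q * y n) / y n := by field_simp
    simp only [r]
    rw [hrhs, div_mul_div_cancel₀ h₁.ne']
    exact div_le_div_of_nonneg_right h₂ h₀.le
  have hq : 0 < q := by nlinarith [sq_nonneg p]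
  have hr_lt : ∀ n, r (n + 1) < p := fun n =>
    lt_of_mul_lt_mul_right (by linarith [hr_step n]) (hr_pos n).le
  have hp : 0 < p := (hr_pos 1).trans (hr_lt 0)
  set δ := (q - p ^ 2 / 4) / p
  have hδ : 0 < δ := div_pos (by linarith) hp
  obtain ⟨n, hn⟩ := exists_nonpos_of_le_sub hδ (u := fun n => r (n + 1)) fun n => by
    have hδp : δ * p = q - p ^ 2 / 4 := div_mul_cancel₀ _ hp.ne'
    have h₁ := hr_pos (n + 1)
    have h₂ := hr_lt n
    have h₃ := hr_step (n + 1)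
    nlinarith [sq_nonneg (r (n + 1) - p / 2), mul_pos hδ (sub_pos.2 h₂)]
  exact hn.not_gt (hr_pos _)

theorem not_forall_pos_of_eventually_le_linear_recurrence {p q : ℝ} (hpq : p ^ 2 < 4 * q)
    {y : ℕ → ℝ} (hy : ∀ᶠ n in atTop, y (n + 2) ≤ p * y (n + 1) - q * y n) : ¬ ∀ n, 0 < y n := by
  intro hpos
  obtain ⟨N, hN⟩ := eventually_atTop.mp hy
  refine not_forall_pos_of_le_linear_recurrence hpq (y := fun n => y (n + N))
    (fun n => ?_) (fun n => hpos _)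
  simpa only [add_right_comm] using hN (n + N) (Nat.le_add_left N n)

/-- `4 β - (c + β) ^ 2 = (β - (1 - s) ^ 2) ((1 + s) ^ 2 - β)` where `s ^ 2 = 1 - c`. -/
lemma add_sq_lt_four_mul {c β : ℝ} (hc : c ≤ 1) (h₁ : (1 - √(1 - c)) ^ 2 < β)
    (h₂ : β < (1 + √(1 - c)) ^ 2) : (c + β) ^ 2 < 4 * β := by
  have hs : √(1 - c) ^ 2 = 1 - c := Real.sq_sqrt (by linarith)
  nlinarith [mul_pos (sub_pos.mpr h₁) (sub_pos.mpr h₂)]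

lemma apply_zero_eq_zero_of_mul_nonneg {f : ℝ → ℝ} (hf : ContinuousAt f 0)
    (hsign : ∀ t, 0 ≤ t * f t) : f 0 = 0 := by
  apply le_antisymm
  · exact le_of_tendsto (hf.tendsto.mono_left nhdsWithin_le_nhds)
      (eventually_nhdsWithin_of_forall (s := Iio 0) fun t ht =>
        nonpos_of_mul_nonneg_right (hsign t) ht)
  · exact ge_of_tendsto (hf.tendsto.mono_left nhdsWithin_le_nhds)
      (eventually_nhdsWithin_of_forall (s := Ioi 0) fun t ht =>
        nonneg_of_mul_nonneg_right (hsign t) ht)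

lemma apply_nonpos_of_mul_nonneg {f : ℝ → ℝ} (hf : ContinuousAt f 0)
    (hsign : ∀ t, 0 ≤ t * f t) {t : ℝ} (ht : t ≤ 0) : f t ≤ 0 := by
  rcases ht.lt_or_eq with ht | rfl
  · exact nonpos_of_mul_nonneg_right (hsign t) ht
  · exact (apply_zero_eq_zero_of_mul_nonneg hf hsign).le

lemma liminf_neg_apply_neg_div_nhdsLT (f : ℝ → ℝ) :
    liminf (fun t => -f (-t) / t) (𝓝[<] 0) = liminf (fun t => f t / t) (𝓝[>] 0) := by
  have hcomp : (fun t => -f (-t) / t) = (fun t => f t / t) ∘ Neg.neg := by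
    ext t
    rw [Function.comp_apply, div_neg, neg_div]
  rw [hcomp, liminf_comp]
  simp

namespace DifferenceEquation

/-- `x` solves `x (n + 1) = c x n + f (x n - x (n - 1))` for `n ≥ 1`, with the index shifted by one. -/
def IsSolution (c : ℝ) (f : ℝ → ℝ) (x : ℕ → ℝ) : Prop :=
  ∀ n, x (n + 2) = c * x (n + 1) + f (x (n + 1) - x n)

variable {c : ℝ} {f : ℝ → ℝ} {x : ℕ → ℝ}

lemma IsSolution.shift (hx : IsSolution c f x) (N : ℕ) : IsSolution c f (fun n => x (n + N)) :=
  fun n => by simpa only [add_right_comm] using hx (n + N)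

lemma IsSolution.neg (hx : IsSolution c f x) :
    IsSolution c (fun t => -f (-t)) (fun n => -x n) :=
  fun n => by simp only [hx n, neg_sub_neg, neg_sub]; ring

lemma IsSolution.sub_succ_eq (hx : IsSolution c f x) (n : ℕ) :
    x (n + 2) - x (n + 1) = f (x (n + 1) - x n) - (1 - c) * x (n + 1) := by
  rw [hx n]; ring

lemma IsSolution.strictAnti_shift_of_le (hc1 : c < 1) (hf : ∀ t ≤ 0, f t ≤ 0)
    (hx : IsSolution c f x) (hpos : ∀ n, 0 < x n) {N : ℕ} (hN : x (N + 1) ≤ x N) :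
    StrictAnti (fun n => x (n + (N + 1))) := by
  have hstep : ∀ n, x (n + 1) ≤ x n → x (n + 2) < x (n + 1) := fun n hn => by
    have := hx.sub_succ_eq n
    nlinarith [hf _ (sub_nonpos.2 hn), hpos (n + 1)]
  have hdec : ∀ k, x (k + N + 2) < x (k + N + 1) := by
    intro k
    induction k with
    | zero => simpa using hstep N hN
    | succ k ih => simpa [add_right_comm] using hstep (k + N + 1) ih.le
  exact strictAnti_nat_of_succ_lt fun k => by simpa [add_assoc, add_comm, add_left_comm] using hdec k

lemma IsSolution.false_of_strictAnti (hc1 : c ≤ 1) (hsign : ∀ t, 0 ≤ t * f t) {α : ℝ}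
    (hl : α ≤ liminf (fun t => f t / t) (𝓝[<] 0)) (hα : (1 - √(1 - c)) ^ 2 < α)
    (hα' : α < (1 + √(1 - c)) ^ 2) (hx : IsSolution c f x) (hpos : ∀ n, 0 < x n)
    (hanti : StrictAnti x) : False := by
  obtain ⟨β, hβ, hβα⟩ := exists_between hα
  have hz_neg : ∀ n, x (n + 1) - x n < 0 := fun n => sub_neg.2 (hanti n.lt_succ_self)
  have hz_lim : Tendsto (fun n => x (n + 1) - x n) atTop (𝓝[<] 0) := by
    have hL := tendsto_atTop_ciInf hanti.antitone ⟨0, forall_mem_range.2 fun n => (hpos n).le⟩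
    refine tendsto_nhdsWithin_iff.2 ⟨?_, Eventually.of_forall hz_neg⟩
    simpa using ((tendsto_add_atTop_iff_nat 1).2 hL).sub hL
  have hbdd : IsBoundedUnder (· ≥ ·) (𝓝[<] 0) (fun t => f t / t) :=
    isBoundedUnder_of_eventually_ge (eventually_nhdsWithin_of_forall (s := Iio 0) fun t ht =>
      div_nonneg_of_nonpos (nonpos_of_mul_nonneg_right (hsign t) ht) (le_of_lt ht))
  have hf_lt : ∀ᶠ n in atTop, β < f (x (n + 1) - x n) / (x (n + 1) - x n) :=
    hz_lim.eventually (eventually_lt_of_lt_liminf (hβα.trans_le hl) hbdd)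
  refine not_forall_pos_of_eventually_le_linear_recurrence
    (add_sq_lt_four_mul hc1 hβ (hβα.trans hα')) (hf_lt.mono fun n hn => ?_) hpos
  have := (lt_div_iff_of_neg (hz_neg n)).mp hn
  rw [hx n]
  linarith

lemma IsSolution.false_of_monotone_bddAbove (hc1 : c < 1) (hf : ContinuousAt f 0) (hf0 : f 0 = 0)
    (hx : IsSolution c f x) (hpos : 0 < x 0) (hmono : Monotone x) (hbdd : BddAbove (range x)) :
    False := by
  obtain ⟨L, hL⟩ : ∃ L, Tendsto x atTop (𝓝 L) := ⟨_, tendsto_atTop_ciSup hmono hbdd⟩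
  have hL₁ := (tendsto_add_atTop_iff_nat 1).2 hL
  have hz : Tendsto (fun n => x (n + 1) - x n) atTop (𝓝 0) := by simpa using hL₁.sub hL
  have hfz : Tendsto (fun n => f (x (n + 1) - x n)) atTop (𝓝 0) := hf0 ▸ hf.tendsto.comp hz
  have hfix : L = c * L := tendsto_nhds_unique ((tendsto_add_atTop_iff_nat 2).2 hL)
    (by simpa using ((hL₁.const_mul c).add hfz).congr fun n => (hx n).symm)
  have hL0 : L = 0 := by nlinarith
  linarith [hmono.ge_of_tendsto hL 0]

lemma IsSolution.false_of_strictMono_not_bddAbove (hc0 : 0 ≤ c) (hc1 : c < 1)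
    (hf : Continuous f) {a t₀ : ℝ} (ha1 : a ≤ 1) (hfb : ∀ t : ℝ, t₀ ≤ |t| → |f t| ≤ a * |t|)
    (hx : IsSolution c f x) (hpos : ∀ n, 0 < x n) (hmono : StrictMono x)
    (hunb : ¬ BddAbove (range x)) : False := by
  obtain ⟨M, hM⟩ := (isCompact_Icc (a := 0) (b := t₀)).bddAbove_image hf.continuousOn
  have hlarge : ∀ᶠ n in atTop, M < (1 - c) * x (n + 1) :=
    (tendsto_add_atTop_iff_nat 1).2 ((tendsto_atTop_atTop_of_monotone' hmono.monotone
      hunb).const_mul_atTop (sub_pos.2 hc1)) |>.eventually_gt_atTop M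
  refine not_forall_pos_of_eventually_le_linear_recurrence (p := c + 1) (q := 1) (by nlinarith)
    (hlarge.mono fun n hn => ?_) hpos
  set z := x (n + 1) - x n
  have hz : 0 < z := sub_pos.2 (hmono n.lt_succ_self)
  have hfz : M < f z := by
    linarith [hx.sub_succ_eq n, sub_pos.2 (hmono (n + 1).lt_succ_self)]
  -- `f` is at most `M` on `[0, t₀]`, so `z` lies beyond `t₀`
  have hzt : t₀ ≤ |z| := by
    by_contra! h
    rw [abs_of_pos hz] at h
    exact (hM (mem_image_of_mem f ⟨hz.le, h.le⟩)).not_gt hfz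
  have hfz_le : f z ≤ z := calc
    f z ≤ |f z| := le_abs_self _
    _ ≤ a * |z| := hfb z hzt
    _ ≤ z := by rw [abs_of_pos hz]; nlinarith
  rw [hx n]
  linarith

theorem IsSolution.not_forall_pos (hc0 : 0 ≤ c) (hc1 : c < 1) (hf : Continuous f)
    (hsign : ∀ t, 0 ≤ t * f t) {a t₀ α : ℝ} (ha1 : a ≤ 1)
    (hfb : ∀ t : ℝ, t₀ ≤ |t| → |f t| ≤ a * |t|)
    (hl : α ≤ liminf (fun t => f t / t) (𝓝[<] 0)) (hα : (1 - √(1 - c)) ^ 2 < α)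
    (hα' : α < (1 + √(1 - c)) ^ 2) (hx : IsSolution c f x) : ¬ ∀ n, 0 < x n := by
  intro hpos
  by_cases hdec : ∃ N, x (N + 1) ≤ x N
  · obtain ⟨N, hN⟩ := hdec
    exact (hx.shift (N + 1)).false_of_strictAnti hc1.le hsign hl hα hα' (fun n => hpos _)
      (hx.strictAnti_shift_of_le hc1 (fun t => apply_nonpos_of_mul_nonneg hf.continuousAt hsign)
        hpos hN)
  simp only [not_exists, not_le] at hdec
  have hmono : StrictMono x := strictMono_nat_of_lt_succ hdec
  by_cases hbdd : BddAbove (range x)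
  · exact hx.false_of_monotone_bddAbove hc1 hf.continuousAt
      (apply_zero_eq_zero_of_mul_nonneg hf.continuousAt hsign) (hpos 0) hmono.monotone hbdd
  · exact hx.false_of_strictMono_not_bddAbove hc0 hc1 hf ha1 hfb hpos hmono hbdd

end DifferenceEquation

open DifferenceEquation

theorem stmt15_general (c a t₀ α₁ α₂ : ℝ) (hc0 : 0 ≤ c) (hc1 : c < 1) (f : ℝ → ℝ)
    (hf : Continuous f) (hsign : ∀ t : ℝ, 0 ≤ t * f t)
    (ha1 : a ≤ 1)
    (hfb : ∀ t : ℝ, t₀ ≤ |t| → |f t| ≤ a * |t|)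
    (hl1 : α₁ ≤ Filter.liminf (fun t => f t / t) (nhdsWithin 0 (Set.Iio 0)))
    (hl2 : α₂ ≤ Filter.liminf (fun t => f t / t) (nhdsWithin 0 (Set.Ioi 0)))
    (hα₁ : (1 - Real.sqrt (1 - c)) ^ 2 < α₁ ∧ α₁ < (1 + Real.sqrt (1 - c)) ^ 2)
    (hα₂ : (1 - Real.sqrt (1 - c)) ^ 2 < α₂ ∧ α₂ < (1 + Real.sqrt (1 - c)) ^ 2)
    (x : ℕ → ℝ)
    (hx : ∀ n : ℕ, 1 ≤ n → x (n + 1) = c * x n + f (x n - x (n - 1))) :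
    ¬ (∃ N : ℕ, ∀ n : ℕ, N ≤ n → 0 < x n) ∧
    ¬ (∃ N : ℕ, ∀ n : ℕ, N ≤ n → x n < 0) := by
  have hsol : IsSolution c f x := fun n => by simpa using hx (n + 1) le_add_self
  constructor
  · rintro ⟨N, hN⟩
    exact (hsol.shift N).not_forall_pos hc0 hc1 hf hsign ha1 hfb hl1 hα₁.1 hα₁.2
      fun n => hN _ (Nat.le_add_left N n)
  · rintro ⟨N, hN⟩
    refine (hsol.neg.shift N).not_forall_pos hc0 hc1 (by fun_prop)
      (fun t => by simpa using hsign (-t)) ha1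
      (fun t ht => by simpa using hfb (-t) (by simpa using ht))
      (by rwa [liminf_neg_apply_neg_div_nhdsLT]) hα₂.1 hα₂.2
      fun n => neg_pos.2 (hN _ (Nat.le_add_left N n))

theorem stmt15 (c a t₀ α₁ α₂ : ℝ) (hc0 : 0 ≤ c) (hc1 : c < 1) (f : ℝ → ℝ)
    (hf : Continuous f) (hsign : ∀ t : ℝ, 0 ≤ t * f t)
    (ht₀ : 0 < t₀) (ha1 : a ≤ 1)
    (hfb : ∀ t : ℝ, t₀ ≤ |t| → |f t| ≤ a * |t|)
    (hl1 : α₁ ≤ Filter.liminf (fun t => f t / t) (nhdsWithin 0 (Set.Iio 0)))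
    (hl2 : α₂ ≤ Filter.liminf (fun t => f t / t) (nhdsWithin 0 (Set.Ioi 0)))
    (hα₁ : (1 - Real.sqrt (1 - c)) ^ 2 < α₁ ∧ α₁ < (1 + Real.sqrt (1 - c)) ^ 2)
    (hα₂ : (1 - Real.sqrt (1 - c)) ^ 2 < α₂ ∧ α₂ < (1 + Real.sqrt (1 - c)) ^ 2)
    (x : ℕ → ℝ)
    (hx : ∀ n : ℕ, 1 ≤ n → x (n + 1) = c * x n + f (x n - x (n - 1))) :
    ¬ (∃ N : ℕ, ∀ n : ℕ, N ≤ n → 0 < x n) ∧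
    ¬ (∃ N : ℕ, ∀ n : ℕ, N ≤ n → x n < 0) :=
  stmt15_general c a t₀ α₁ α₂ hc0 hc1 f hf hsign ha1 hfb hl1 hl2 hα₁ hα₂ x hx
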